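/- arXiv:2111.09196 — 2 statements merged into one kernel-verified Lean document; each statement's English description precedes it below -/
import Mathlib

section
/- For every $n \ge 2$, the least one-step doubling constant of the path graph $L_n$ equals $1 + 2\cos\big(\frac{\pi}{n+1}\big)$; that is, $\inf_\mu \max_{1\le j\le n} \frac{\mu(B(j,1))}{\mu(j)} = 1 + 2\cos\big(\frac{\pi}{n+1}\big)$, where the infimum runs over all positive weight functions $\mu$ on $\{1,\dots,n\}$. -/
open Finset Real

/-- The closed ball of center `j` and radius `k` in the path graph `L_n` on `{1,…,n}`. -/
def lball (n j k : ℕ) : Finset ℕ :=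
  (Finset.Icc 1 n).filter fun i => j - k ≤ i ∧ i ≤ j + k

/-- The radius-one doubling constant `C⁰_μ` of a weight `μ` on `L_n`. -/
noncomputable def C0 (n : ℕ) (μ : ℕ → ℝ) : ℝ :=
  sSup {x | ∃ j ∈ Finset.Icc 1 n, x = (∑ l ∈ lball n j 1, μ l) / μ j}

/-!
With `θ = π/(n+1)`, the vector `v_j = sin(jθ)` is positive on `{1,…,n}` and, because it vanishes
at `0` and `n+1`, satisfies `∑_{l ∈ B(j,1)} v_l = (1 + 2cos θ) v_j` at every vertex, boundary
included. Taking `μ = v` gives `C⁰_μ = 1 + 2cos θ`. Conversely, if some positive `μ` had all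
ratios `μ(B(j,1))/μ(j) < 1 + 2cos θ`, pairing with `v` and using the symmetry of the relation
`l ∈ B(j,1)` would give `(1 + 2cos θ) ∑ v_j μ_j < (1 + 2cos θ) ∑ v_j μ_j`.
-/

theorem exists_le_sum_div_of_eigenvector {ι : Type*} {s : Finset ι} (hs : s.Nonempty)
    {B : ι → Finset ι} (hB : ∀ i j, i ∈ s ∧ j ∈ B i ↔ i ∈ B j ∧ j ∈ s)
    {v : ι → ℝ} (hv : ∀ i ∈ s, 0 < v i) {c : ℝ} (hvc : ∀ i ∈ s, ∑ l ∈ B i, v l = c * v i)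
    {μ : ι → ℝ} (hμ : ∀ i ∈ s, 0 < μ i) :
    ∃ i ∈ s, c ≤ (∑ l ∈ B i, μ l) / μ i := by
  by_contra! hlt
  have hpair : ∑ i ∈ s, ∑ l ∈ B i, v i * μ l = ∑ l ∈ s, ∑ i ∈ B l, v i * μ l :=
    sum_comm' hB
  have hleft : ∑ i ∈ s, ∑ l ∈ B i, v i * μ l < ∑ i ∈ s, c * v i * μ i := by
    refine sum_lt_sum_of_nonempty hs fun i hi => ?_
    rw [← mul_sum, mul_comm c, mul_assoc]
    exact mul_lt_mul_of_pos_left ((div_lt_iff₀ (hμ i hi)).mp (hlt i hi)) (hv i hi)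
  have hright : ∑ l ∈ s, ∑ i ∈ B l, v i * μ l = ∑ i ∈ s, c * v i * μ i := by
    refine sum_congr rfl fun l hl => ?_
    rw [← sum_mul, hvc l hl]
  exact (hpair ▸ hright ▸ hleft).false

theorem mem_lball_symm (n k i j : ℕ) :
    i ∈ Icc 1 n ∧ j ∈ lball n i k ↔ i ∈ lball n j k ∧ j ∈ Icc 1 n := by
  simp only [lball, mem_filter, mem_Icc]
  omega

theorem sum_lball_one {n j : ℕ} (hj : j ∈ Icc 1 n) {f : ℕ → ℝ} (h0 : f 0 = 0)
    (hn : f (n + 1) = 0) :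
    ∑ l ∈ lball n j 1, f l = f (j - 1) + f j + f (j + 1) := by
  have hj' := mem_Icc.mp hj
  have hball : lball n j 1 = ({j - 1, j, j + 1} : Finset ℕ).filter (· ∈ Icc 1 n) := by
    ext i
    simp only [lball, mem_filter, mem_Icc, mem_insert, mem_singleton]
    omega
  rw [hball, sum_filter_of_ne, sum_insert, sum_pair, add_assoc]
  · omega
  · simp only [mem_insert, mem_singleton]
    omega
  · simp only [mem_insert, mem_singleton, mem_Icc]
    rintro x (rfl | rfl | rfl) hx
    · refine ⟨Nat.one_le_iff_ne_zero.mpr fun h => hx (by rw [h, h0]), by omega⟩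
    · omega
    · refine ⟨by omega, not_lt.mp fun h => hx ?_⟩
      rwa [show j + 1 = n + 1 by omega]

noncomputable def sineWeight (n j : ℕ) : ℝ := sin (j * (π / (n + 1)))

theorem sineWeight_pos {n j : ℕ} (hj : j ∈ Icc 1 n) : 0 < sineWeight n j := by
  obtain ⟨h1, h2⟩ := mem_Icc.mp hj
  apply sin_pos_of_pos_of_lt_pi (by positivity)
  rw [← mul_div_assoc, div_lt_iff₀ (by positivity)]
  have : (j : ℝ) < n + 1 := by exact_mod_cast Nat.lt_succ_of_le h2
  nlinarith [pi_pos]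

theorem sum_lball_sineWeight {n j : ℕ} (hj : j ∈ Icc 1 n) :
    ∑ l ∈ lball n j 1, sineWeight n l = (1 + 2 * cos (π / (n + 1))) * sineWeight n j := by
  have hend : ((n : ℝ) + 1) * (π / (n + 1)) = π := mul_div_cancel₀ _ (by positivity)
  rw [sum_lball_one hj (by simp [sineWeight]) (by simp [sineWeight, hend])]
  simp only [sineWeight]
  rw [Nat.cast_sub (mem_Icc.mp hj).1]
  push_cast
  rw [sub_mul, add_mul, one_mul, sin_sub, sin_add]
  ring

theorem le_C0 {n : ℕ} (μ : ℕ → ℝ) {j : ℕ} (hj : j ∈ Icc 1 n) :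
    (∑ l ∈ lball n j 1, μ l) / μ j ≤ C0 n μ := by
  refine le_csSup (Set.Finite.bddAbove ?_) ⟨j, hj, rfl⟩
  refine ((Icc 1 n).finite_toSet.image fun j => (∑ l ∈ lball n j 1, μ l) / μ j).subset ?_
  rintro x ⟨i, hi, rfl⟩
  exact ⟨i, hi, rfl⟩

theorem C0_eq_of_forall_eq {n : ℕ} (hn : 1 ≤ n) {μ : ℕ → ℝ} {c : ℝ}
    (h : ∀ j ∈ Icc 1 n, (∑ l ∈ lball n j 1, μ l) / μ j = c) : C0 n μ = c := by
  have h1 : 1 ∈ Icc 1 n := mem_Icc.mpr ⟨le_rfl, hn⟩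
  have : {x | ∃ j ∈ Icc 1 n, x = (∑ l ∈ lball n j 1, μ l) / μ j} = {c} :=
    Set.eq_singleton_iff_unique_mem.mpr
      ⟨⟨1, h1, (h 1 h1).symm⟩, fun _ ⟨j, hj, hx⟩ => hx.trans (h j hj)⟩
  rw [C0, this, csSup_singleton]

/-- For `n ≥ 2`, the least radius-one doubling constant of the path graph `L_n` is
`C⁰_{L_n} = 1 + 2 cos(π/(n+1))`. -/
theorem stmt_7 (n : ℕ) (hn : 2 ≤ n) :
    sInf {c | ∃ μ : ℕ → ℝ, (∀ j ∈ Finset.Icc 1 n, 0 < μ j) ∧ c = C0 n μ}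
      = 1 + 2 * Real.cos (π / (n + 1)) := by
  have hpos : ∀ j ∈ Icc 1 n, 0 < sineWeight n j := fun j hj => sineWeight_pos hj
  refine IsLeast.csInf_eq ⟨⟨sineWeight n, hpos, ?_⟩, ?_⟩
  · refine (C0_eq_of_forall_eq (by omega) fun j hj => ?_).symm
    rw [sum_lball_sineWeight hj, mul_div_cancel_right₀ _ (hpos j hj).ne']
  · rintro c ⟨μ, hμ, rfl⟩
    obtain ⟨j, hj, hle⟩ := exists_le_sum_div_of_eigenvector ⟨1, mem_Icc.mpr ⟨le_rfl, by omega⟩⟩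
      (mem_lball_symm n 1) hpos (fun j hj => sum_lball_sineWeight hj) hμ
    exact hle.trans (le_C0 μ hj)
end

section
/- For every $n \ge 2$, the least doubling constant of the path graph satisfies $1 + 2\cos\big(\frac{\pi}{n+1}\big) \le C_{L_n} < 3$. -/
open Finset Real

/-- The doubling constant `C_μ` of a weight `μ` on `L_n`. -/
noncomputable def Cmu (n : ℕ) (μ : ℕ → ℝ) : ℝ :=
  sSup {x | ∃ j ∈ Finset.Icc 1 n, ∃ k : ℕ,
    x = (∑ i ∈ lball n j (2 * k + 1), μ i) / (∑ i ∈ lball n j k, μ i)}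

/-- The least doubling constant `C_{L_n}` of the path graph `L_n`. -/
noncomputable def CLn (n : ℕ) : ℝ :=
  sInf {c | ∃ μ : ℕ → ℝ, (∀ j ∈ Finset.Icc 1 n, 0 < μ j) ∧ c = Cmu n μ}

/-!
Lower bound: `s p = sin (p π/(n+1))` is a positive eigenvector, with eigenvalue
`λ = 1 + 2 cos (π/(n+1))`, of the radius-one ball operator `s ↦ (p ↦ ∑_{i ∈ B(p,1)} s i)`.
Pairing `μ` against `s` and using the symmetry of `i ∈ B(p,1)` shows that `μ(B(p,1)) < λ μ(p)`
cannot hold at every `p`, so the ratio `μ(B(p,1))/μ(B(p,0))` reaches `λ` somewhere.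

Upper bound: a weight whose values lie within a factor `6/5` of each other and which is strictly
concave has all doubling ratios below `3`: at radius `0` concavity gives
`μ(j-1) + μ(j) + μ(j+1) < 3μ(j)` in the interior and balls have at most two points at the ends,
while for `k ≥ 1` the ball `B(j,2k+1)` has at most `2|B(j,k)|+1` points and `|B(j,k)| ≥ 2`.
The weight `6n² + i(n+1-i)` is such a weight.
-/

lemma mem_lball {n j k i : ℕ} :
    i ∈ lball n j k ↔ 1 ≤ i ∧ i ≤ n ∧ j - k ≤ i ∧ i ≤ j + k := by
  simp [lball, and_assoc]

lemma lball_subset_Icc (n j k : ℕ) : lball n j k ⊆ Icc 1 n := filter_subset _ _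

lemma card_lball (n j k : ℕ) : #(lball n j k) = min n (j + k) + 1 - max 1 (j - k) := by
  rw [show lball n j k = Icc (max 1 (j - k)) (min n (j + k)) by
    ext; simp only [mem_lball, mem_Icc]; omega, Nat.card_Icc]

lemma lball_zero {n j : ℕ} (hj : j ∈ Icc 1 n) : lball n j 0 = {j} := by
  ext; simp only [mem_lball, mem_singleton]; simp only [mem_Icc] at hj; omega

lemma mem_lball_comm {n k p i : ℕ} :
    p ∈ Icc 1 n ∧ i ∈ lball n p k ↔ p ∈ lball n i k ∧ i ∈ Icc 1 n := by
  simp only [mem_lball, mem_Icc]; omega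

lemma sum_lball_one_of_eq_zero {M : Type*} [AddCommMonoid M] {n p : ℕ} (hp : p ∈ Icc 1 n)
    {f : ℕ → M} (h0 : f 0 = 0) (hn : f (n + 1) = 0) :
    ∑ i ∈ lball n p 1, f i = f (p - 1) + f p + f (p + 1) := by
  rw [mem_Icc] at hp
  have hsub : lball n p 1 ⊆ {p - 1, p, p + 1} := fun i hi => by
    simp only [mem_lball] at hi; simp only [mem_insert, mem_singleton]; omega
  rw [sum_subset hsub, sum_insert (by simp; omega), sum_insert (by simp), sum_singleton,
    add_assoc]
  intro i hi hi'
  simp only [mem_insert, mem_singleton, mem_lball] at hi hi'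
  obtain rfl | rfl : i = 0 ∨ i = n + 1 := by omega
  exacts [h0, hn]

noncomputable def doublingRatio (n : ℕ) (μ : ℕ → ℝ) (j k : ℕ) : ℝ :=
  (∑ i ∈ lball n j (2 * k + 1), μ i) / (∑ i ∈ lball n j k, μ i)

def doublingRatios (n : ℕ) (μ : ℕ → ℝ) : Set ℝ :=
  {x | ∃ j ∈ Icc 1 n, ∃ k : ℕ, x = doublingRatio n μ j k}

lemma Cmu_eq_sSup (n : ℕ) (μ : ℕ → ℝ) : Cmu n μ = sSup (doublingRatios n μ) := rfl

lemma doublingRatios_finite (n : ℕ) (μ : ℕ → ℝ) : (doublingRatios n μ).Finite := by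
  -- A doubling ratio only depends on the two balls, which are subsets of `{1,…,n}`.
  let P := (Icc 1 n).powerset
  let ratio : Finset ℕ × Finset ℕ → ℝ := fun B => (∑ i ∈ B.1, μ i) / ∑ i ∈ B.2, μ i
  refine ((P ×ˢ P).finite_toSet.image ratio).subset ?_
  rintro _ ⟨j, -, k, rfl⟩
  exact ⟨(lball n j (2 * k + 1), lball n j k),
    mem_coe.2 (mem_product.2
      ⟨mem_powerset.2 (lball_subset_Icc ..), mem_powerset.2 (lball_subset_Icc ..)⟩), rfl⟩

lemma doublingRatio_le_Cmu {n : ℕ} (μ : ℕ → ℝ) {j : ℕ} (hj : j ∈ Icc 1 n) (k : ℕ) :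
    doublingRatio n μ j k ≤ Cmu n μ :=
  le_csSup (doublingRatios_finite n μ).bddAbove ⟨j, hj, k, rfl⟩

lemma Cmu_lt_of_forall_doublingRatio_lt {n : ℕ} (hn : 1 ≤ n) {μ : ℕ → ℝ} {c : ℝ}
    (h : ∀ j ∈ Icc 1 n, ∀ k, doublingRatio n μ j k < c) : Cmu n μ < c := by
  obtain ⟨j, hj, k, hx⟩ : sSup (doublingRatios n μ) ∈ doublingRatios n μ :=
    Set.Nonempty.csSup_mem ⟨_, 1, mem_Icc.2 ⟨le_rfl, hn⟩, 0, rfl⟩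
      (doublingRatios_finite n μ)
  rw [Cmu_eq_sSup, hx]
  exact h j hj k

lemma le_CLn {n : ℕ} {c : ℝ}
    (h : ∀ μ : ℕ → ℝ, (∀ j ∈ Icc 1 n, 0 < μ j) → c ≤ Cmu n μ) : c ≤ CLn n :=
  le_csInf ⟨_, 1, fun _ _ => one_pos, rfl⟩ (by rintro _ ⟨μ, hμ, rfl⟩; exact h μ hμ)

lemma CLn_le_Cmu {n : ℕ} {c : ℝ}
    (h : ∀ μ : ℕ → ℝ, (∀ j ∈ Icc 1 n, 0 < μ j) → c ≤ Cmu n μ) {μ : ℕ → ℝ}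
    (hμ : ∀ j ∈ Icc 1 n, 0 < μ j) : CLn n ≤ Cmu n μ :=
  csInf_le ⟨c, by rintro _ ⟨ν, hν, rfl⟩; exact h ν hν⟩ ⟨μ, hμ, rfl⟩

lemma sum_mul_sum_lball_comm (n k : ℕ) (s μ : ℕ → ℝ) :
    ∑ p ∈ Icc 1 n, s p * ∑ i ∈ lball n p k, μ i =
      ∑ i ∈ Icc 1 n, μ i * ∑ p ∈ lball n i k, s p := by
  simp only [mul_sum]
  rw [sum_comm' fun p i => mem_lball_comm]
  simp only [mul_comm]

lemma exists_mul_le_sum_lball_of_eigenvector {n k : ℕ} (hn : 1 ≤ n) {s : ℕ → ℝ} {l : ℝ}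
    (hs : ∀ p ∈ Icc 1 n, 0 < s p)
    (heig : ∀ p ∈ Icc 1 n, ∑ i ∈ lball n p k, s i = l * s p)
    (μ : ℕ → ℝ) : ∃ p ∈ Icc 1 n, l * μ p ≤ ∑ i ∈ lball n p k, μ i := by
  by_contra! hlt
  have key : ∑ p ∈ Icc 1 n, s p * ∑ i ∈ lball n p k, μ i =
      ∑ p ∈ Icc 1 n, s p * (l * μ p) := by
    rw [sum_mul_sum_lball_comm]
    exact sum_congr rfl fun p hp => by rw [heig p hp]; ring
  exact (sum_lt_sum_of_nonempty ⟨1, mem_Icc.2 ⟨le_rfl, hn⟩⟩ fun p hp =>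
    mul_lt_mul_of_pos_left (hlt p hp) (hs p hp)).ne key

lemma sin_mul_pi_div_pos {n p : ℕ} (hp : p ∈ Icc 1 n) : 0 < sin (p * (π / (n + 1))) := by
  rw [mem_Icc] at hp
  have hp1 : (1 : ℝ) ≤ p := by exact_mod_cast hp.1
  have hpn : (p : ℝ) < n + 1 := by exact_mod_cast Nat.lt_succ_of_le hp.2
  apply sin_pos_of_pos_of_lt_pi (by positivity)
  rw [mul_div_assoc', div_lt_iff₀ (by positivity)]
  nlinarith [pi_pos]

lemma sum_lball_one_sin {n p : ℕ} (hp : p ∈ Icc 1 n) :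
    ∑ i ∈ lball n p 1, sin (i * (π / (n + 1))) =
      (1 + 2 * cos (π / (n + 1))) * sin (p * (π / (n + 1))) := by
  set θ := π / (n + 1)
  have hθ : ((n + 1 : ℕ) : ℝ) * θ = π := by
    rw [Nat.cast_succ]; exact mul_div_cancel₀ π (by positivity)
  rw [sum_lball_one_of_eq_zero hp (by simp) (by rw [hθ, sin_pi]),
    Nat.cast_sub (mem_Icc.1 hp).1]
  push_cast
  rw [sub_mul, add_mul, one_mul, sin_sub, sin_add]
  ring

lemma one_add_two_cos_le_Cmu {n : ℕ} (hn : 1 ≤ n) {μ : ℕ → ℝ}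
    (hμ : ∀ j ∈ Icc 1 n, 0 < μ j) : 1 + 2 * cos (π / (n + 1)) ≤ Cmu n μ := by
  obtain ⟨p, hp, hle⟩ := exists_mul_le_sum_lball_of_eigenvector hn
    (fun p hp => sin_mul_pi_div_pos hp) (fun p hp => sum_lball_one_sin hp) μ
  calc 1 + 2 * cos (π / (n + 1)) ≤ doublingRatio n μ p 0 := by
        rw [doublingRatio, lball_zero hp, sum_singleton, le_div_iff₀ (hμ p hp)]
        exact hle
    _ ≤ Cmu n μ := doublingRatio_le_Cmu μ hp 0

lemma doublingRatio_lt_three {n : ℕ} (hn : 2 ≤ n) {μ : ℕ → ℝ} {a b : ℝ} (ha : 0 < a)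
    (hab : 5 * b < 6 * a) (hμ : ∀ i ∈ Icc 1 n, a ≤ μ i ∧ μ i ≤ b)
    (hconc : ∀ j, 2 ≤ j → j < n → μ (j - 1) + μ (j + 1) < 2 * μ j)
    {j : ℕ} (hj : j ∈ Icc 1 n) (k : ℕ) : doublingRatio n μ j k < 3 := by
  have hnum : ∑ i ∈ lball n j (2 * k + 1), μ i ≤ #(lball n j (2 * k + 1)) * b := by
    simpa using sum_le_card_nsmul _ _ b fun i hi => (hμ i (lball_subset_Icc _ _ _ hi)).2
  have hden : #(lball n j k) * a ≤ ∑ i ∈ lball n j k, μ i := by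
    simpa using card_nsmul_le_sum _ _ a fun i hi => (hμ i (lball_subset_Icc _ _ _ hi)).1
  have hb : 0 ≤ b := ha.le.trans ((hμ j hj).1.trans (hμ j hj).2)
  have hcard := card_lball n j k
  have hcard' := card_lball n j (2 * k + 1)
  rw [mem_Icc] at hj
  have hden_pos : 0 < ∑ i ∈ lball n j k, μ i :=
    lt_of_lt_of_le (mul_pos (by norm_cast; omega) ha) hden
  rw [doublingRatio, div_lt_iff₀ hden_pos]
  rcases Nat.eq_zero_or_pos k with rfl | hk
  · simp only [mul_zero, zero_add] at hnum hcard' ⊢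
    rw [lball_zero (mem_Icc.2 hj), sum_singleton]
    have hμj := (hμ j (mem_Icc.2 hj)).1
    by_cases hint : 2 ≤ j ∧ j < n
    · have hball : lball n j 1 = {j - 1, j, j + 1} := by
        ext; simp only [mem_lball, mem_insert, mem_singleton]; omega
      rw [hball, sum_insert (by simp; omega), sum_insert (by simp), sum_singleton]
      linarith [hconc j hint.1 hint.2]
    · have h2 : (#(lball n j 1) : ℝ) ≤ 2 := by norm_cast; omega
      nlinarith
  · have hc2 : (2 : ℝ) ≤ #(lball n j k) := by norm_cast; omega
    have hc' : (#(lball n j (2 * k + 1)) : ℝ) ≤ 2 * #(lball n j k) + 1 := by norm_cast; omega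
    nlinarith

noncomputable def concaveWeight (n : ℕ) (i : ℕ) : ℝ := 6 * n ^ 2 + i * (n + 1 - i)

lemma concaveWeight_mem_Icc {n i : ℕ} (hi : i ∈ Icc 1 n) :
    6 * (n : ℝ) ^ 2 ≤ concaveWeight n i ∧ concaveWeight n i ≤ 7 * n ^ 2 := by
  rw [mem_Icc] at hi
  have h1 : (1 : ℝ) ≤ i := by exact_mod_cast hi.1
  have h2 : (i : ℝ) ≤ n := by exact_mod_cast hi.2
  constructor <;> unfold concaveWeight <;> nlinarith

lemma concaveWeight_sub_one_add_add_one {n j : ℕ} (hj : 1 ≤ j) :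
    concaveWeight n (j - 1) + concaveWeight n (j + 1) = 2 * concaveWeight n j - 2 := by
  simp only [concaveWeight, Nat.cast_sub hj]
  push_cast
  ring

lemma Cmu_concaveWeight_lt_three {n : ℕ} (hn : 2 ≤ n) : Cmu n (concaveWeight n) < 3 := by
  have hpos : (0 : ℝ) < 6 * n ^ 2 := by positivity
  refine Cmu_lt_of_forall_doublingRatio_lt (by omega) fun j hj k =>
    doublingRatio_lt_three hn hpos (by nlinarith) (fun i hi => concaveWeight_mem_Icc hi)
      (fun j hj _ => ?_) hj k
  rw [concaveWeight_sub_one_add_add_one (by omega)]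
  linarith

/-- For every `n ≥ 2`, the least doubling constant of the path graph `L_n` satisfies
`1 + 2 cos(π/(n+1)) ≤ C_{L_n} < 3`. -/
theorem stmt_16 (n : ℕ) (hn : 2 ≤ n) :
    1 + 2 * Real.cos (π / (n + 1)) ≤ CLn n ∧ CLn n < 3 := by
  have hlow : ∀ μ : ℕ → ℝ, (∀ j ∈ Icc 1 n, 0 < μ j) →
      1 + 2 * cos (π / (n + 1)) ≤ Cmu n μ := fun μ hμ => one_add_two_cos_le_Cmu (by omega) hμ
  have hw : ∀ i ∈ Icc 1 n, 0 < concaveWeight n i := fun i hi =>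
    lt_of_lt_of_le (by positivity) (concaveWeight_mem_Icc hi).1
  exact ⟨le_CLn hlow, (CLn_le_Cmu hlow hw).trans_lt (Cmu_concaveWeight_lt_three hn)⟩
end
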